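/- arXiv:math/9802092 — 2 statements merged into one kernel-verified Lean document; each statement's English description precedes it below -/
import Mathlib

section
/- Let $k$ be a field of characteristic $p > 0$ and $R$ the Nottingham group over $k$ with filtration $R_i$. If $n, m \geq 1$ and $m - n$ is relatively prime to $p$, then the commutator subgroup satisfies $[R_n, R_m] \subseteq R_{n+m}$ and moreover $R_{n+m} \subseteq \overline{[R_n, R_m]} \cdot R_{n+m+1}$ (i.e., every element of $R_{n+m}$ is congruent modulo $R_{n+m+1}$ to a commutator of elements of $R_n$ and $R_m$), assuming $k = \mathbb{F}_p$. -/
open PowerSeries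

/-- Composition of power series `f ∘ g` (intended for `g` with zero constant term). -/
noncomputable def pcomp {k : Type} [CommRing k] (f g : PowerSeries k) : PowerSeries k :=
  PowerSeries.mk fun n =>
    PowerSeries.coeff n (Polynomial.eval₂ (PowerSeries.C (R := k)) g (PowerSeries.trunc (n + 1) f))

/-- `n`-fold compositional iterate of `f`. -/
noncomputable def pcompIter {k : Type} [CommRing k] (f : PowerSeries k) : ℕ → PowerSeries k
  | 0 => PowerSeries.X
  | n + 1 => pcomp f (pcompIter f n)

/-- Membership in the Nottingham group: `f = t + a₂ t² + ⋯`. -/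
def IsNott {k : Type} [CommRing k] (f : PowerSeries k) : Prop :=
  PowerSeries.coeff 0 f = 0 ∧ PowerSeries.coeff 1 f = 1

/-- Membership in the congruence subgroup `R_i = {f : f(t) ≡ t mod t^{i+1}}`. -/
def InR {k : Type} [CommRing k] (f : PowerSeries k) (i : ℕ) : Prop :=
  IsNott f ∧ ∀ m, 2 ≤ m → m ≤ i → PowerSeries.coeff m f = 0

set_option linter.unusedVariables false

open Finset

section Aux
variable {k : Type} [CommRing k]

theorem coeff_pcomp (f g : PowerSeries k) (N : ℕ) :
    coeff N (pcomp f g) = ∑ i ∈ range (N + 1), coeff i f * coeff N (g ^ i) := by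
  rw [pcomp, coeff_mk,
    Polynomial.eval₂_eq_sum_range' (C (R := k)) (natDegree_trunc_lt f N) g, map_sum]
  refine Finset.sum_congr rfl fun i hi => ?_
  rw [coeff_C_mul, coeff_trunc, if_pos (mem_range.mp hi)]

theorem coeff_pow_eq_zero {g : PowerSeries k} (h0 : coeff 0 g = 0) {N i : ℕ} (h : N < i) :
    coeff N (g ^ i) = 0 := by
  have : (X : PowerSeries k) ^ i ∣ g ^ i :=
    pow_dvd_pow_of_dvd (X_dvd_iff.mpr (by rwa [coeff_zero_eq_constantCoeff] at h0)) i
  exact X_pow_dvd_iff.mp this N h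

theorem coeff_pcomp' {g : PowerSeries k} (h0 : coeff 0 g = 0) (f : PowerSeries k) {N M : ℕ}
    (hM : N + 1 ≤ M) :
    coeff N (pcomp f g) = ∑ i ∈ range M, coeff i f * coeff N (g ^ i) := by
  rw [coeff_pcomp]
  refine Finset.sum_subset (range_subset_range.mpr hM) fun i hi hni => ?_
  rw [coeff_pow_eq_zero h0 (by simpa using hni), mul_zero]

theorem coeff_pcomp_congr {F1 F2 : PowerSeries k} {N : ℕ}
    (h : ∀ i ≤ N, coeff i F1 = coeff i F2) (g : PowerSeries k) :
    coeff N (pcomp F1 g) = coeff N (pcomp F2 g) := by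
  rw [coeff_pcomp, coeff_pcomp]
  exact Finset.sum_congr rfl fun i hi => by rw [h i (by simpa using Nat.lt_succ_iff.mp (mem_range.mp hi))]

theorem pcomp_X_right (f : PowerSeries k) : pcomp f X = f := by
  ext N
  rw [coeff_pcomp]
  rw [Finset.sum_eq_single N]
  · simp
  · intro i hi hne
    rw [← pow_one (X : PowerSeries k), ← pow_mul, one_mul, coeff_X_pow,
      if_neg (fun hh => hne hh.symm), mul_zero]
  · intro hN; exact absurd (self_mem_range_succ N) hN

theorem pcomp_X_left {g : PowerSeries k} (h0 : coeff 0 g = 0) : pcomp X g = g := by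
  ext N
  rw [coeff_pcomp, Finset.sum_eq_single 1]
  · simp
  · intro i hi hne
    rw [coeff_X, if_neg hne, zero_mul]
  · intro h1
    have hN : N = 0 := by simpa using h1
    subst hN; simp [h0]

theorem pcomp_C (a : k) (g : PowerSeries k) : pcomp (C a) g = C a := by
  ext N
  rw [coeff_pcomp, Finset.sum_eq_single 0]
  · simp [coeff_zero_eq_constantCoeff]
    rcases Nat.eq_zero_or_pos N with h | h
    · subst h; simp
    · rw [if_neg (by omega), (coeff_C ..), if_neg (by omega)]
  · intro i hi hne
    rw [coeff_C, if_neg hne, zero_mul]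
  · intro h1; exact absurd (mem_range.mpr (by omega)) h1

theorem coeff_zero_pcomp (f g : PowerSeries k) : coeff 0 (pcomp f g) = coeff 0 f := by
  rw [coeff_pcomp]; simp

theorem coeff_one_pcomp (f g : PowerSeries k) (hf : coeff 0 f = 0) :
    coeff 1 (pcomp f g) = coeff 1 f * coeff 1 g := by
  rw [coeff_pcomp]
  rw [show range 2 = {0, 1} by rfl, Finset.sum_insert (by simp), Finset.sum_singleton]
  simp [hf]

theorem pcomp_add (f1 f2 g : PowerSeries k) :
    pcomp (f1 + f2) g = pcomp f1 g + pcomp f2 g := by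
  ext N
  rw [map_add, coeff_pcomp, coeff_pcomp, coeff_pcomp, ← Finset.sum_add_distrib]
  exact Finset.sum_congr rfl fun i _ => by rw [map_add, add_mul]

theorem pcomp_sub (f1 f2 g : PowerSeries k) :
    pcomp (f1 - f2) g = pcomp f1 g - pcomp f2 g := by
  ext N
  rw [map_sub, coeff_pcomp, coeff_pcomp, coeff_pcomp, ← Finset.sum_sub_distrib]
  exact Finset.sum_congr rfl fun i _ => by rw [map_sub, sub_mul]

theorem pcomp_coe {g : PowerSeries k} (h0 : coeff 0 g = 0) (P : Polynomial k) :
    pcomp (P : PowerSeries k) g = Polynomial.eval₂ (C (R := k)) g P := by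
  ext N
  have hM : N + 1 ≤ N + P.natDegree + 1 := by omega
  rw [coeff_pcomp' h0 _ hM,
    Polynomial.eval₂_eq_sum_range' (C (R := k)) (Nat.lt_succ_self P.natDegree) g, map_sum]
  symm
  refine Finset.sum_subset (range_subset_range.mpr (by omega)) ?_ |>.trans
    (Finset.sum_congr rfl fun i hi => ?_)
  · intro i hi hni
    rw [coeff_C_mul, Polynomial.coeff_eq_zero_of_natDegree_lt (by simpa using hni), zero_mul]
  · rw [coeff_C_mul, Polynomial.coeff_coe]

theorem pcomp_mul {g : PowerSeries k} (h0 : coeff 0 g = 0) (f1 f2 : PowerSeries k) :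
    pcomp (f1 * f2) g = pcomp f1 g * pcomp f2 g := by
  ext N
  have key : ∀ f : PowerSeries k, ∀ i ≤ N,
      coeff i (pcomp ((trunc (N+1) f : Polynomial k) : PowerSeries k) g) = coeff i (pcomp f g) := by
    intro f i hiN
    refine coeff_pcomp_congr (fun j hj => ?_) g
    rw [Polynomial.coeff_coe, coeff_trunc, if_pos (by omega)]
  have h12 : coeff N (pcomp (f1 * f2) g)
      = coeff N (pcomp ((trunc (N+1) f1 * trunc (N+1) f2 : Polynomial k) : PowerSeries k) g) := by
    refine coeff_pcomp_congr (fun j hj => ?_) g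
    rw [Polynomial.coe_mul, coeff_mul, coeff_mul]
    refine Finset.sum_congr rfl fun x hx => ?_
    have hx1 : x.1 ≤ N := by have := Finset.HasAntidiagonal.antidiagonal.fst_le hx; omega
    have hx2 : x.2 ≤ N := by have := Finset.HasAntidiagonal.antidiagonal.snd_le hx; omega
    rw [Polynomial.coeff_coe, Polynomial.coeff_coe, coeff_trunc, coeff_trunc,
      if_pos (by omega), if_pos (by omega)]
  rw [h12, pcomp_coe h0, Polynomial.eval₂_mul, ← pcomp_coe h0, ← pcomp_coe h0,
    coeff_mul, coeff_mul]
  refine Finset.sum_congr rfl fun x hx => ?_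
  have hx1 : x.1 ≤ N := by have := Finset.HasAntidiagonal.antidiagonal.fst_le hx; omega
  have hx2 : x.2 ≤ N := by have := Finset.HasAntidiagonal.antidiagonal.snd_le hx; omega
  rw [key f1 x.1 hx1, key f2 x.2 hx2]

theorem pcomp_pow {g : PowerSeries k} (h0 : coeff 0 g = 0) (f : PowerSeries k) (i : ℕ) :
    pcomp (f ^ i) g = (pcomp f g) ^ i := by
  induction i with
  | zero => simpa using pcomp_C 1 g
  | succ i ih => rw [pow_succ, pow_succ, pcomp_mul h0, ih]

theorem pcomp_X_pow {g : PowerSeries k} (h0 : coeff 0 g = 0) (i : ℕ) :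
    pcomp (X ^ i) g = g ^ i := by
  rw [pcomp_pow h0, pcomp_X_left h0]

theorem pcomp_assoc {g h : PowerSeries k} (f : PowerSeries k)
    (hg : coeff 0 g = 0) (hh : coeff 0 h = 0) :
    pcomp (pcomp f g) h = pcomp f (pcomp g h) := by
  have hgh : coeff 0 (pcomp g h) = 0 := by rw [coeff_zero_pcomp, hg]
  ext N
  rw [coeff_pcomp, coeff_pcomp]
  have lhs : ∀ i ∈ Finset.range (N+1), coeff i (pcomp f g) * coeff N (h ^ i)
      = ∑ j ∈ Finset.range (N+1), coeff j f * (coeff i (g ^ j) * coeff N (h ^ i)) := by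
    intro i hi
    rw [coeff_pcomp' hg f (Nat.succ_le_succ (Nat.lt_succ_iff.mp (Finset.mem_range.mp hi))),
      Finset.sum_mul]
    exact Finset.sum_congr rfl fun j _ => by ring
  rw [Finset.sum_congr rfl lhs, Finset.sum_comm]
  refine Finset.sum_congr rfl fun j hj => ?_
  rw [← pcomp_pow hh g j, coeff_pcomp, Finset.mul_sum]

-- difference of powers
theorem pow_sub_pow_dvd {g1 g2 : PowerSeries k} (h1 : coeff 0 g1 = 0) (h2 : coeff 0 g2 = 0)
    {N : ℕ} (hd : (X : PowerSeries k) ^ N ∣ g1 - g2) {i : ℕ} (hi : 1 ≤ i) :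
    (X : PowerSeries k) ^ (N + i - 1) ∣ g1 ^ i - g2 ^ i := by
  have hX1 : (X : PowerSeries k) ∣ g1 := X_dvd_iff.mpr (by rwa [coeff_zero_eq_constantCoeff] at h1)
  have hX2 : (X : PowerSeries k) ∣ g2 := X_dvd_iff.mpr (by rwa [coeff_zero_eq_constantCoeff] at h2)
  rw [← geom_sum₂_mul]
  have hsum : (X : PowerSeries k) ^ (i - 1) ∣ ∑ j ∈ Finset.range i, g1 ^ j * g2 ^ (i - 1 - j) := by
    refine Finset.dvd_sum fun j hj => ?_
    have hj' : j < i := Finset.mem_range.mp hj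
    calc (X : PowerSeries k) ^ (i-1) = X ^ j * X ^ (i - 1 - j) := by
          rw [← pow_add]; congr 1; omega
    _ ∣ g1 ^ j * g2 ^ (i - 1 - j) :=
          mul_dvd_mul (pow_dvd_pow_of_dvd hX1 j) (pow_dvd_pow_of_dvd hX2 _)
  have := mul_dvd_mul hsum hd
  rw [← pow_add] at this
  have he : i - 1 + N = N + i - 1 := by omega
  rw [he] at this
  exact this

-- change of outer series (easy direction)
theorem pcomp_sub_dvd_left {f1 f2 : PowerSeries k} {N : ℕ}
    (hd : (X : PowerSeries k) ^ N ∣ f1 - f2) (g : PowerSeries k) :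
    (X : PowerSeries k) ^ N ∣ pcomp f1 g - pcomp f2 g := by
  rw [X_pow_dvd_iff] at hd ⊢
  intro j hj
  rw [map_sub, sub_eq_zero]
  refine coeff_pcomp_congr (fun i hi => ?_) g
  have := hd i (lt_of_le_of_lt hi hj)
  rw [map_sub, sub_eq_zero] at this
  exact this

-- change of inner series
theorem coeff_pcomp_inner_congr {g1 g2 : PowerSeries k} (h1 : coeff 0 g1 = 0)
    (h2 : coeff 0 g2 = 0) {N : ℕ} (hagree : ∀ t, t < N → coeff t g1 = coeff t g2)
    (f : PowerSeries k) {j : ℕ} (hj : j < N) :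
    coeff j (pcomp f g1) = coeff j (pcomp f g2) := by
  have hd : (X : PowerSeries k) ^ N ∣ g1 - g2 := by
    rw [X_pow_dvd_iff]; intro t ht; rw [map_sub, sub_eq_zero]; exact hagree t ht
  rw [coeff_pcomp, coeff_pcomp, ← sub_eq_zero, ← Finset.sum_sub_distrib]
  refine Finset.sum_eq_zero fun i hi => ?_
  rw [← mul_sub]
  rcases Nat.eq_zero_or_pos i with h | h
  · subst h; simp
  · have := pow_sub_pow_dvd h1 h2 hd h
    rw [X_pow_dvd_iff] at this
    have := this j (by omega)
    rw [map_sub] at this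
    rw [this, mul_zero]

theorem coeff_pcomp_inner_congr_top {g1 g2 : PowerSeries k} (h1 : coeff 0 g1 = 0)
    (h2 : coeff 0 g2 = 0) {N : ℕ} (hagree : ∀ t, t < N → coeff t g1 = coeff t g2)
    (f : PowerSeries k) :
    coeff N (pcomp f g1) - coeff N (pcomp f g2)
      = coeff 1 f * (coeff N g1 - coeff N g2) := by
  have hd : (X : PowerSeries k) ^ N ∣ g1 - g2 := by
    rw [X_pow_dvd_iff]; intro t ht; rw [map_sub, sub_eq_zero]; exact hagree t ht
  rw [coeff_pcomp, coeff_pcomp, ← Finset.sum_sub_distrib]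
  rw [Finset.sum_eq_single 1]
  · simp [mul_sub]
  · intro i hi hne
    rw [← mul_sub]
    rcases Nat.eq_zero_or_pos i with h | h
    · subst h; simp
    · have h2i : 2 ≤ i := by omega
      have := pow_sub_pow_dvd h1 h2 hd h
      rw [X_pow_dvd_iff] at this
      have := this N (by omega)
      rw [map_sub] at this
      rw [this, mul_zero]
  · intro h1'
    rcases Nat.eq_zero_or_pos N with h | h
    · subst h
      simp [h1, h2]
    · exact absurd (Finset.mem_range.mpr (by omega)) h1'

theorem pcomp_fix_sub_dvd {F g : PowerSeries k} {a b : ℕ} (ha : 1 ≤ a) (hb : 1 ≤ b)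
    (hF : (X : PowerSeries k) ^ a ∣ F) (hg0 : coeff 0 g = 0)
    (hg : (X : PowerSeries k) ^ b ∣ (g - X)) :
    (X : PowerSeries k) ^ (a + b - 1) ∣ pcomp F g - F := by
  rw [X_pow_dvd_iff]
  intro j hj
  rw [map_sub, coeff_pcomp,
    show coeff j F = ∑ i ∈ Finset.range (j+1), coeff i F * coeff j (X^i) from by
      rw [← coeff_pcomp, pcomp_X_right],
    ← Finset.sum_sub_distrib]
  refine Finset.sum_eq_zero fun i hi => ?_
  rw [← mul_sub]
  rcases lt_or_ge i a with h | h
  · rw [X_pow_dvd_iff.mp hF i h, zero_mul]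
  · have hXc : coeff 0 (X : PowerSeries k) = 0 := by simp
    have := pow_sub_pow_dvd hg0 hXc hg (by omega : 1 ≤ i)
    rw [X_pow_dvd_iff] at this
    have := this j (by omega)
    rw [map_sub] at this
    rw [this, mul_zero]

theorem pcomp_comm_dvd {f g : PowerSeries k} {n m : ℕ} (hn : 1 ≤ n) (hm : 1 ≤ m)
    (hf0 : coeff 0 f = 0) (hg0 : coeff 0 g = 0)
    (hf : (X : PowerSeries k) ^ (n+1) ∣ f - X) (hg : (X : PowerSeries k) ^ (m+1) ∣ g - X) :
    (X : PowerSeries k) ^ (n+m+1) ∣ pcomp f g - pcomp g f := by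
  have e1 : pcomp f g = g + pcomp (f - X) g := by
    conv_lhs => rw [show f = X + (f - X) by ring]
    rw [pcomp_add, pcomp_X_left hg0]
  have e2 : pcomp g f = f + pcomp (g - X) f := by
    conv_lhs => rw [show g = X + (g - X) by ring]
    rw [pcomp_add, pcomp_X_left hf0]
  have key : pcomp f g - pcomp g f
      = (pcomp (f - X) g - (f - X)) - (pcomp (g - X) f - (g - X)) := by
    rw [e1, e2]; ring
  rw [key]
  have d1 := pcomp_fix_sub_dvd (by omega : 1 ≤ n+1) (by omega : 1 ≤ m+1) hf hg0 hg
  have d2 := pcomp_fix_sub_dvd (by omega : 1 ≤ m+1) (by omega : 1 ≤ n+1) hg hf0 hf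
  have he1 : n + 1 + (m + 1) - 1 = n + m + 1 := by omega
  have he2 : m + 1 + (n + 1) - 1 = n + m + 1 := by omega
  rw [he1] at d1; rw [he2] at d2
  exact dvd_sub d1 d2

theorem InR.dvd' {h : PowerSeries k} {i : ℕ} (hh : InR h i) :
    (X : PowerSeries k) ^ (i+1) ∣ h - X := by
  rw [X_pow_dvd_iff]
  intro j hj
  rw [map_sub]
  match j with
  | 0 => rw [hh.1.1]; simp
  | 1 => rw [hh.1.2, coeff_one_X, sub_self]
  | (t+2) => rw [hh.2 (t+2) (by omega) (by omega), coeff_X, if_neg (by omega), sub_zero]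

theorem InR_of_dvd {h : PowerSeries k} {i : ℕ} (hi : 1 ≤ i)
    (hd : (X : PowerSeries k) ^ (i+1) ∣ h - X) : InR h i := by
  rw [X_pow_dvd_iff] at hd
  have key : ∀ j < i + 1, coeff j h = coeff j (X : PowerSeries k) := by
    intro j hj
    have := hd j hj
    rw [map_sub, sub_eq_zero] at this
    exact this
  refine ⟨⟨?_, ?_⟩, ?_⟩
  · rw [key 0 (by omega)]; simp
  · rw [key 1 (by omega), coeff_one_X]
  · intro j h2 hji
    rw [key j (by omega), coeff_X, if_neg (by omega)]

theorem coeff_self_pow {g : PowerSeries k} (h0 : coeff 0 g = 0) (N : ℕ) :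
    coeff N (g ^ N) = (coeff 1 g) ^ N := by
  induction N with
  | zero => simp
  | succ N ih =>
    rw [pow_succ, pow_succ, coeff_mul, Finset.sum_eq_single (N, 1)]
    · rw [ih]
    · rintro ⟨a, b⟩ hab hne
      have hab' : a + b = N + 1 := Finset.HasAntidiagonal.mem_antidiagonal.mp hab
      rcases lt_or_ge a N with h | h
      · rw [coeff_pow_eq_zero h0 h, zero_mul]
      · have : b = 0 ∨ (a = N ∧ b = 1) := by omega
        rcases this with h | h
        · subst h; simp [h0]
        · exact absurd (by rw [h.1, h.2]) hne
    · intro hmem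
      exact absurd (Finset.HasAntidiagonal.mem_antidiagonal.mpr (by omega)) hmem

noncomputable def invSeq (f : PowerSeries k) : ℕ → PowerSeries k
  | 0 => 0
  | (j+1) => invSeq f j
      + C (coeff (j+1) (X : PowerSeries k) - coeff (j+1) (pcomp f (invSeq f j)))
        * X ^ (j+1)

theorem invSeq_zero_coeff (f : PowerSeries k) (j : ℕ) : coeff 0 (invSeq f j) = 0 := by
  induction j with
  | zero => simp [invSeq]
  | succ j ih =>
    rw [invSeq, map_add, ih, coeff_C_mul, coeff_X_pow, if_neg (by omega), mul_zero, add_zero]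

theorem invSeq_stab (f : PowerSeries k) (j t : ℕ) (ht : t ≠ j + 1) :
    coeff t (invSeq f (j+1)) = coeff t (invSeq f j) := by
  rw [invSeq, map_add, coeff_C_mul, coeff_X_pow, if_neg ht, mul_zero, add_zero]

theorem invSeq_solve (f : PowerSeries k) (hf0 : coeff 0 f = 0) (hf1 : coeff 1 f = 1)
    (j : ℕ) : ∀ t ≤ j, coeff t (pcomp f (invSeq f j)) = coeff t (X : PowerSeries k) := by
  induction j with
  | zero =>
    intro t ht
    have : t = 0 := by omega
    subst this
    rw [coeff_zero_pcomp, hf0]; simp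
  | succ j ih =>
    intro t ht
    have h1 : coeff 0 (invSeq f (j+1)) = 0 := invSeq_zero_coeff f (j+1)
    have h2 : coeff 0 (invSeq f j) = 0 := invSeq_zero_coeff f j
    have hagree : ∀ t', t' < j + 1 → coeff t' (invSeq f (j+1)) = coeff t' (invSeq f j) :=
      fun t' ht' => invSeq_stab f j t' (by omega)
    rcases Nat.lt_or_ge t (j+1) with h | h
    · rw [coeff_pcomp_inner_congr h1 h2 hagree f h]
      exact ih t (by omega)
    · have ht' : t = j + 1 := by omega
      subst ht'
      have key := coeff_pcomp_inner_congr_top h1 h2 hagree f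
      rw [hf1, one_mul] at key
      have hc : coeff (j+1) (invSeq f (j+1)) - coeff (j+1) (invSeq f j)
          = coeff (j+1) (X : PowerSeries k) - coeff (j+1) (pcomp f (invSeq f j)) := by
        rw [invSeq, map_add, coeff_C_mul, coeff_X_pow, if_pos rfl, mul_one]
        ring
      rw [hc] at key
      linear_combination key

theorem exists_right_inv (f : PowerSeries k) (hf0 : coeff 0 f = 0) (hf1 : coeff 1 f = 1) :
    ∃ g : PowerSeries k, coeff 0 g = 0 ∧ coeff 1 g = 1 ∧ pcomp f g = X := by
  set g : PowerSeries k := mk fun t => coeff t (invSeq f t) with hgdef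
  have gStab : ∀ t j, t ≤ j → coeff t g = coeff t (invSeq f j) := by
    intro t j htj
    induction j with
    | zero =>
      have : t = 0 := by omega
      subst this; rw [hgdef, coeff_mk]
    | succ j ih =>
      rcases Nat.lt_or_ge t (j+1) with h | h
      · rw [invSeq_stab f j t (by omega)]
        exact ih (by omega)
      · have : t = j + 1 := by omega
        subst this; rw [hgdef, coeff_mk]
  have hg0 : coeff 0 g = 0 := by rw [hgdef, coeff_mk]; exact invSeq_zero_coeff f 0
  refine ⟨g, hg0, ?_, ?_⟩
  · rw [gStab 1 1 (le_refl _), invSeq, invSeq, map_add, coeff_C_mul, coeff_X_pow,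
      if_pos rfl, mul_one]
    have : coeff 1 (pcomp f (0 : PowerSeries k)) = 0 := by
      rw [coeff_one_pcomp f 0 hf0]; simp
    simp [this]
  · ext t
    have h1 : coeff 0 (invSeq f t) = 0 := invSeq_zero_coeff f t
    have hagree : ∀ t', t' < t + 1 → coeff t' g = coeff t' (invSeq f t) :=
      fun t' ht' => gStab t' t (by omega)
    rw [coeff_pcomp_inner_congr hg0 h1 hagree f (Nat.lt_succ_self t)]
    exact invSeq_solve f hf0 hf1 t t (le_refl _)

theorem exists_inv (f : PowerSeries k) (hf0 : coeff 0 f = 0) (hf1 : coeff 1 f = 1) :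
    ∃ g : PowerSeries k, coeff 0 g = 0 ∧ coeff 1 g = 1 ∧ pcomp f g = X ∧ pcomp g f = X := by
  obtain ⟨g, hg0, hg1, hfg⟩ := exists_right_inv f hf0 hf1
  obtain ⟨h, hh0, hh1, hgh⟩ := exists_right_inv g hg0 hg1
  have hfh : f = h := by
    calc f = pcomp f X := (pcomp_X_right f).symm
    _ = pcomp f (pcomp g h) := by rw [hgh]
    _ = pcomp (pcomp f g) h := (pcomp_assoc f hg0 hh0).symm
    _ = pcomp X h := by rw [hfg]
    _ = h := pcomp_X_left hh0
  exact ⟨g, hg0, hg1, hfg, by rw [hfh]; exact hgh⟩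

theorem cancel_mid {a b z : PowerSeries k} (hab : pcomp a b = X) (hb : coeff 0 b = 0)
    (hz : coeff 0 z = 0) : pcomp a (pcomp b z) = z := by
  rw [← pcomp_assoc a hb hz, hab, pcomp_X_left hz]

theorem part1 {f g finv ginv : PowerSeries k} {n m : ℕ} (hn : 1 ≤ n) (hm : 1 ≤ m)
    (hf : InR f n) (hg : InR g m) (hfinv0 : coeff 0 finv = 0) (hginv0 : coeff 0 ginv = 0)
    (hffi : pcomp f finv = X) (hfif : pcomp finv f = X)
    (hggi : pcomp g ginv = X) (hgig : pcomp ginv g = X) :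
    InR (pcomp (pcomp (pcomp f g) finv) ginv) (n + m) := by
  have hf0 : coeff 0 f = 0 := hf.1.1
  have hg0 : coeff 0 g = 0 := hg.1.1
  set u := pcomp f g with hu
  set v := pcomp g f with hv
  set w := pcomp finv ginv with hw
  have hw0 : coeff 0 w = 0 := by rw [hw, coeff_zero_pcomp, hfinv0]
  have hc : pcomp (pcomp u finv) ginv = pcomp u w := pcomp_assoc u hfinv0 hginv0
  have hfw : pcomp f w = ginv := by
    rw [hw, ← pcomp_assoc f hfinv0 hginv0, hffi, pcomp_X_left hginv0]
  have hvw : pcomp v w = X := by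
    rw [hv, pcomp_assoc g hf0 hw0, hfw, hggi]
  have hdUV : (X : PowerSeries k) ^ (n+m+1) ∣ u - v :=
    pcomp_comm_dvd hn hm hf0 hg0 hf.dvd' hg.dvd'
  have hdc : (X : PowerSeries k) ^ (n+m+1) ∣ pcomp u w - X := by
    have h := pcomp_sub_dvd_left hdUV w
    rwa [hvw] at h
  rw [hc]
  exact InR_of_dvd (by omega) hdc

theorem comm_inv {f g finv ginv : PowerSeries k}
    (hf0 : coeff 0 f = 0) (hg0 : coeff 0 g = 0)
    (hfinv0 : coeff 0 finv = 0) (hginv0 : coeff 0 ginv = 0)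
    (hffi : pcomp f finv = X) (hfif : pcomp finv f = X)
    (hggi : pcomp g ginv = X) (hgig : pcomp ginv g = X) :
    pcomp (pcomp f (pcomp g (pcomp finv ginv)))
      (pcomp g (pcomp f (pcomp ginv finv))) = X := by
  have hW0 : coeff 0 (pcomp finv ginv) = 0 := by rw [coeff_zero_pcomp, hfinv0]
  have hW'0 : coeff 0 (pcomp ginv finv) = 0 := by rw [coeff_zero_pcomp, hginv0]
  have hgW0 : coeff 0 (pcomp g (pcomp finv ginv)) = 0 := by rw [coeff_zero_pcomp, hg0]
  have hfW'0 : coeff 0 (pcomp f (pcomp ginv finv)) = 0 := by rw [coeff_zero_pcomp, hf0]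
  have hcinv0 : coeff 0 (pcomp g (pcomp f (pcomp ginv finv))) = 0 := by
    rw [coeff_zero_pcomp, hg0]
  rw [pcomp_assoc f hgW0 hcinv0, pcomp_assoc g hW0 hcinv0]
  have h1 : pcomp ginv (pcomp g (pcomp f (pcomp ginv finv)))
      = pcomp f (pcomp ginv finv) := cancel_mid hgig hg0 hfW'0
  have h2 : pcomp (pcomp finv ginv) (pcomp g (pcomp f (pcomp ginv finv)))
      = pcomp ginv finv := by
    rw [pcomp_assoc finv hginv0 hcinv0, h1]
    exact cancel_mid hfif hf0 hW'0
  rw [h2, cancel_mid hggi hginv0 hfinv0, hffi]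

theorem right_assoc_comm {f g finv ginv : PowerSeries k}
    (hg0 : coeff 0 g = 0) (hfinv0 : coeff 0 finv = 0) (hginv0 : coeff 0 ginv = 0) :
    pcomp (pcomp (pcomp f g) finv) ginv = pcomp f (pcomp g (pcomp finv ginv)) := by
  rw [pcomp_assoc (pcomp f g) hfinv0 hginv0,
    pcomp_assoc f hg0 (by rw [coeff_zero_pcomp, hfinv0])]

theorem coeff_pcomp_outer_top {c1 c2 : PowerSeries k} {N : ℕ}
    (hagree : ∀ i, i < N → coeff i c1 = coeff i c2) {v : PowerSeries k}
    (hv0 : coeff 0 v = 0) :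
    coeff N (pcomp c1 v) - coeff N (pcomp c2 v)
      = (coeff N c1 - coeff N c2) * (coeff 1 v) ^ N := by
  rw [coeff_pcomp, coeff_pcomp, ← Finset.sum_sub_distrib]
  rw [Finset.sum_eq_single N]
  · rw [← sub_mul, coeff_self_pow hv0]
  · intro i hi hne
    have hiN : i < N := by have := Finset.mem_range.mp hi; omega
    rw [hagree i hiN, sub_self]
  · intro h; exact absurd (Finset.self_mem_range_succ N) h

theorem coeff_binom (a : k) {q r : ℕ} (hq : 1 ≤ q) :
    coeff (r + q + 1) ((X + C a * X ^ (q+1)) ^ (r+1)) = (r+1 : ℕ) * a := by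
  rw [add_pow, map_sum]
  have hterm : ∀ i ∈ Finset.range (r+2),
      (X : PowerSeries k) ^ i * (C a * X ^ (q+1)) ^ (r+1-i) * ((r+1).choose i : PowerSeries k)
      = C (a ^ (r+1-i) * ((r+1).choose i : k)) * X ^ (i + (q+1)*(r+1-i)) := by
    intro i _
    rw [mul_pow, ← map_pow, ← map_natCast (C (R := k)) ((r+1).choose i), ← pow_mul, map_mul]
    ring
  rw [Finset.sum_congr rfl fun i hi => congrArg (coeff (r+q+1)) (hterm i hi)]
  rw [Finset.sum_eq_single r]
  · rw [show r + 1 - r = 1 from by omega, coeff_C_mul, coeff_X_pow, if_pos (by omega),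
      mul_one, pow_one, Nat.choose_succ_self_right, mul_comm]
  · intro i hi hne
    rw [coeff_C_mul, coeff_X_pow, if_neg ?_, mul_zero]
    intro heq
    have hi2 : i < r + 2 := Finset.mem_range.mp hi
    have hsplit : (q+1)*(r+1-i) = q*(r+1-i) + (r+1-i) := by ring
    rw [hsplit] at heq
    have ht : q * (r+1-i) = q := by omega
    rcases Nat.eq_zero_or_pos (r+1-i) with h0 | h0
    · rw [h0, mul_zero] at ht; omega
    · rcases Nat.lt_or_ge (r+1-i) 2 with hlt | hge
      · exact hne (by omega)
      · have h2 : q * 2 ≤ q * (r+1-i) := Nat.mul_le_mul_left q hge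
        omega
  · intro h; exact absurd (Finset.mem_range.mpr (by omega)) h

end Aux

theorem stmt2 (p : ℕ) [Fact p.Prime] (n m : ℕ) (hn : 1 ≤ n) (hm : 1 ≤ m)
    (hcop : ¬ (p : ℤ) ∣ ((m : ℤ) - (n : ℤ))) :
    (∀ f g finv ginv : PowerSeries (ZMod p), InR f n → InR g m →
      PowerSeries.coeff 0 finv = 0 → PowerSeries.coeff 0 ginv = 0 →
      pcomp f finv = PowerSeries.X → pcomp finv f = PowerSeries.X →
      pcomp g ginv = PowerSeries.X → pcomp ginv g = PowerSeries.X →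
      InR (pcomp (pcomp (pcomp f g) finv) ginv) (n + m)) ∧
    (∀ h : PowerSeries (ZMod p), InR h (n + m) →
      ∃ f g finv ginv r : PowerSeries (ZMod p), InR f n ∧ InR g m ∧
        PowerSeries.coeff 0 finv = 0 ∧ PowerSeries.coeff 0 ginv = 0 ∧
        pcomp f finv = PowerSeries.X ∧ pcomp finv f = PowerSeries.X ∧
        pcomp g ginv = PowerSeries.X ∧ pcomp ginv g = PowerSeries.X ∧
        InR r (n + m + 1) ∧
        h = pcomp (pcomp (pcomp (pcomp f g) finv) ginv) r) := by
  constructor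
  · intro f g finv ginv hf hg hfi0 hgi0 hffi hfif hggi hgig
    exact part1 hn hm hf hg hfi0 hgi0 hffi hfif hggi hgig
  · intro h hh
    have hden : ((n : (ZMod p)) - (m : (ZMod p))) ≠ 0 := by
      intro h0
      apply hcop
      rw [← ZMod.intCast_zmod_eq_zero_iff_dvd]
      push_cast
      rw [← neg_sub ((n : (ZMod p))) ((m : (ZMod p))), h0, neg_zero]
    set N := n + m + 1 with hNdef
    set c0 : (ZMod p) := coeff N h with hc0def
    set b : (ZMod p) := c0 * ((n : (ZMod p)) - m)⁻¹ with hbdef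
    have hbden : b * ((n : (ZMod p)) - m) = c0 := by
      rw [hbdef, mul_assoc, inv_mul_cancel₀ hden, mul_one]
    set f : PowerSeries (ZMod p) := X + X ^ (n+1) with hfdef
    set g : PowerSeries (ZMod p) := X + C b * X ^ (m+1) with hgdef
    have hInRf : InR f n := by
      refine InR_of_dvd hn ?_
      have : f - X = X ^ (n+1) := by rw [hfdef]; ring
      rw [this]
    have hInRg : InR g m := by
      refine InR_of_dvd hm ?_
      have : g - X = C b * X ^ (m+1) := by rw [hgdef]; ring
      rw [this]
      exact dvd_mul_left _ _
    have hf0 : coeff 0 f = 0 := hInRf.1.1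
    have hg0 : coeff 0 g = 0 := hInRg.1.1
    have hf1 : coeff 1 f = 1 := hInRf.1.2
    have hg1 : coeff 1 g = 1 := hInRg.1.2
    obtain ⟨finv, hfi0, hfi1, hffi, hfif⟩ := exists_inv f hf0 hf1
    obtain ⟨ginv, hgi0, hgi1, hggi, hgig⟩ := exists_inv g hg0 hg1
    set c : PowerSeries (ZMod p) := pcomp (pcomp (pcomp f g) finv) ginv with hcdef
    have hc : InR c (n + m) := part1 hn hm hInRf hInRg hfi0 hgi0 hffi hfif hggi hgig
    set u := pcomp f g with hu
    set v := pcomp g f with hv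
    set w := pcomp finv ginv with hw
    set w' := pcomp ginv finv with hw'
    have hv0 : coeff 0 v = 0 := by rw [hv, coeff_zero_pcomp, hg0]
    have hw0 : coeff 0 w = 0 := by rw [hw, coeff_zero_pcomp, hfi0]
    have hw'0 : coeff 0 w' = 0 := by rw [hw', coeff_zero_pcomp, hgi0]
    have hcuw : c = pcomp u w := by rw [hcdef, hw, pcomp_assoc u hfi0 hgi0]
    have hwv : pcomp w v = X := by
      rw [hw, hv, pcomp_assoc finv hgi0 hv0, cancel_mid hgig hg0 hf0, hfif]
    have hcv : pcomp c v = u := by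
      rw [hcuw, pcomp_assoc u hw0 hv0, hwv, pcomp_X_right]
    -- Step A
    have hNne1 : N ≠ 1 := by omega
    have hcoeffNX : coeff N (X : PowerSeries (ZMod p)) = 0 := by
      rw [coeff_X, if_neg hNne1]
    have hag : ∀ i, i < N → coeff i c = coeff i (X : PowerSeries (ZMod p)) := by
      intro i hi
      have := X_pow_dvd_iff.mp hc.dvd' i (by omega)
      rw [map_sub, sub_eq_zero] at this
      exact this
    have hv1 : coeff 1 v = 1 := by
      rw [hv, coeff_one_pcomp g f hg0, hg1, hf1, one_mul]
    have hstepA : coeff N u - coeff N v = coeff N c := by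
      have := coeff_pcomp_outer_top hag hv0
      rw [hcv, pcomp_X_left hv0, hcoeffNX, sub_zero, hv1, one_pow, mul_one] at this
      exact this
    -- Step B
    have hu_eq : u = g + g ^ (n+1) := by
      rw [hu, hfdef, pcomp_add, pcomp_X_left hg0, pcomp_X_pow hg0]
    have hv_eq : v = f + C b * f ^ (m+1) := by
      rw [hv, hgdef, pcomp_add, pcomp_X_left hf0, pcomp_mul hf0, pcomp_C, pcomp_X_pow hf0]
    have hcoeffNg : coeff N g = 0 := by
      rw [hgdef, map_add, coeff_X, if_neg hNne1, coeff_C_mul, coeff_X_pow,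
        if_neg (by omega), mul_zero, add_zero]
    have hcoeffNf : coeff N f = 0 := by
      rw [hfdef, map_add, coeff_X, if_neg hNne1, coeff_X_pow, if_neg (by omega), add_zero]
    have hbinom_g : coeff N (g ^ (n+1)) = ((n+1 : ℕ) : (ZMod p)) * b := by
      rw [hgdef, hNdef]
      exact coeff_binom b hm
    have hbinom_f : coeff N (f ^ (m+1)) = ((m+1 : ℕ) : (ZMod p)) := by
      have hf' : f = X + C (1:(ZMod p)) * X ^ (n+1) := by rw [map_one, one_mul, hfdef]
      rw [hf', show N = m + n + 1 by omega]
      rw [coeff_binom (1:(ZMod p)) hn, mul_one]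
    have hNu : coeff N u = ((n+1:ℕ) : ZMod p) * b := by
      rw [hu_eq, map_add, hcoeffNg, hbinom_g, zero_add]
    have hNv : coeff N v = b * ((m+1:ℕ) : ZMod p) := by
      rw [hv_eq, map_add, hcoeffNf, coeff_C_mul, hbinom_f, zero_add]
    have hstepB : coeff N u - coeff N v = c0 := by
      rw [hNu, hNv, ← hbden]
      push_cast
      ring
    have hcN : coeff N c = c0 := by rw [← hstepA, hstepB]
    -- inverse of c and remainder r
    set cinv : PowerSeries (ZMod p) := pcomp (pcomp (pcomp g f) ginv) finv with hcinvdef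
    have hcn : c = pcomp f (pcomp g w) := by
      rw [hcdef, hw]; exact right_assoc_comm hg0 hfi0 hgi0
    have hcinvn : cinv = pcomp g (pcomp f w') := by
      rw [hcinvdef, hw']; exact right_assoc_comm hf0 hgi0 hfi0
    have hccinv : pcomp c cinv = X := by
      rw [hcn, hcinvn, hw, hw']
      exact comm_inv hf0 hg0 hfi0 hgi0 hffi hfif hggi hgig
    have hcinvc : pcomp cinv c = X := by
      rw [hcn, hcinvn, hw, hw']
      exact comm_inv hg0 hf0 hgi0 hfi0 hggi hgig hffi hfif
    have hcinv0 : coeff 0 cinv = 0 := by rw [hcinvdef, coeff_zero_pcomp, coeff_zero_pcomp, coeff_zero_pcomp, hg0]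
    have hh0 : coeff 0 h = 0 := hh.1.1
    have hc0' : coeff 0 c = 0 := hc.1.1
    set r : PowerSeries (ZMod p) := pcomp cinv h with hrdef
    have hhcr : h = pcomp c r := by
      rw [hrdef, cancel_mid hccinv hcinv0 hh0]
    have hInRr : InR r (n + m + 1) := by
      refine InR_of_dvd (by omega) ?_
      rw [X_pow_dvd_iff]
      intro j hj
      rw [map_sub, sub_eq_zero]
      have hagree : ∀ t, t < n + m + 2 → coeff t h = coeff t c := by
        intro t ht
        rcases Nat.lt_or_ge t N with h' | h'
        · have h1 := X_pow_dvd_iff.mp hh.dvd' t (by omega)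
          have h2 := X_pow_dvd_iff.mp hc.dvd' t (by omega)
          rw [map_sub, sub_eq_zero] at h1 h2
          rw [h1, h2]
        · have ht' : t = N := by omega
          rw [ht', ← hc0def, hcN]
      rw [hrdef, coeff_pcomp_inner_congr hh0 hc0' hagree cinv (by omega : j < n + m + 2),
        hcinvc]
    exact ⟨f, g, finv, ginv, r, hInRf, hInRg, hfi0, hgi0, hffi, hfif, hggi, hgig, hInRr,
      by rw [← hcdef]; exact hhcr⟩
end

section
/- Let $p$ be a prime, $k$ a field of characteristic $p$, and $\sigma(t) = t + a t^{1+qi} + (\text{higher order terms})$ a power series in the Nottingham group over $k$, where $q = p^r$ with $r \geq 1$, $i \geq 1$, and $a \neq 0$. Then the $p$-fold compositional power $\sigma^{\circ p}$ satisfies $\sigma^{\circ p}(t) \equiv t \bmod t^{1+pqi}$ but $\sigma^{\circ p}(t) \not\equiv t \bmod t^{2+pqi}$; i.e., $i(\sigma^{\circ p}) = p \cdot i(\sigma)$ when $i(\sigma) = qi$. -/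
open PowerSeries
open Finset


section Fdiff
variable {K : Type} [CommRing K]

/-- Forward difference operator on functions `ℕ → K`. -/
def fdiff (f : ℕ → K) : ℕ → K := fun j => f (j + 1) - f j

lemma fdiff_apply (f : ℕ → K) (j : ℕ) : fdiff f j = f (j+1) - f j := rfl

lemma fdiff_add (f g : ℕ → K) : fdiff (f + g) = fdiff f + fdiff g := by
  funext j; simp [fdiff]; ring

lemma fdiff_iter_add (n : ℕ) (f g : ℕ → K) :
    fdiff^[n] (f + g) = fdiff^[n] f + fdiff^[n] g := by
  induction n generalizing f g with
  | zero => rfl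
  | succ n ih => simp [Function.iterate_succ_apply, fdiff_add, ih]

lemma fdiff_zero_fn : fdiff (0 : ℕ → K) = 0 := by funext j; simp [fdiff]

lemma fdiff_iter_zero_fn (n : ℕ) : fdiff^[n] (0 : ℕ → K) = 0 := by
  induction n with
  | zero => rfl
  | succ n ih => simp [Function.iterate_succ_apply, fdiff_zero_fn, ih]

lemma fdiff_const_mul (c : K) (f : ℕ → K) :
    fdiff (fun j => c * f j) = fun j => c * fdiff f j := by
  funext j; simp [fdiff]; ring

lemma fdiff_iter_const_mul (n : ℕ) (c : K) (f : ℕ → K) :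
    fdiff^[n] (fun j => c * f j) = fun j => c * fdiff^[n] f j := by
  induction n generalizing f with
  | zero => rfl
  | succ n ih =>
      rw [Function.iterate_succ_apply, fdiff_const_mul, ih]
      funext j; rw [Function.iterate_succ_apply]

lemma fdiff_iter_sum {α : Type} (n : ℕ) (s : Finset α) (F : α → ℕ → K) :
    fdiff^[n] (fun j => ∑ x ∈ s, F x j) = fun j => ∑ x ∈ s, fdiff^[n] (F x) j := by
  classical
  induction s using Finset.induction with
  | empty => simp only [Finset.sum_empty]; exact fdiff_iter_zero_fn n
  | insert x s hx ih =>
      have : (fun j => ∑ y ∈ insert x s, F y j)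
          = (F x) + (fun j => ∑ y ∈ s, F y j) := by
        funext j; simp [Finset.sum_insert hx]
      rw [this, fdiff_iter_add, ih]
      funext j; simp [Finset.sum_insert hx]

/-- `DegLT n f` : `f` is a "polynomial" of degree `< n` (iterated differences vanish). -/
def DegLT (n : ℕ) (f : ℕ → K) : Prop := fdiff^[n] f = 0

lemma degLT_mono {n m : ℕ} {f : ℕ → K} (h : DegLT n f) (hnm : n ≤ m) : DegLT m f := by
  unfold DegLT at *
  obtain ⟨t, rfl⟩ := Nat.exists_eq_add_of_le hnm
  rw [add_comm, Function.iterate_add_apply, h, fdiff_iter_zero_fn]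

lemma degLT_zero_fn (n : ℕ) : DegLT n (0 : ℕ → K) := fdiff_iter_zero_fn n

lemma degLT_of_all_zero {n : ℕ} {f : ℕ → K} (h : ∀ j, f j = 0) : DegLT n f := by
  have : f = 0 := funext h
  rw [this]; exact degLT_zero_fn n

lemma degLT_const (c : K) : DegLT 1 (fun _ => c) := by
  unfold DegLT
  rw [Function.iterate_one]
  funext j; simp [fdiff]

lemma degLT_sum {α : Type} {n : ℕ} {s : Finset α} {F : α → ℕ → K}
    (h : ∀ x ∈ s, DegLT n (F x)) : DegLT n (fun j => ∑ x ∈ s, F x j) := by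
  unfold DegLT at *
  rw [fdiff_iter_sum]
  funext j
  simp only [Pi.zero_apply]
  exact Finset.sum_eq_zero fun x hx => by rw [h x hx]; rfl

lemma degLT_apply {n m : ℕ} {f : ℕ → K} (h : DegLT n f) (hnm : n ≤ m) (x : ℕ) :
    fdiff^[m] f x = 0 := by
  have := degLT_mono h hnm
  rw [this]; rfl

lemma fdiff_shift (f : ℕ → K) : fdiff (fun j => f (j+1)) = fun j => fdiff f (j+1) := rfl

lemma fdiff_iter_shift (n : ℕ) (f : ℕ → K) :
    fdiff^[n] (fun j => f (j+1)) = fun j => fdiff^[n] f (j+1) := by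
  induction n generalizing f with
  | zero => rfl
  | succ n ih =>
      rw [Function.iterate_succ_apply, fdiff_shift, ih]
      funext j; rw [Function.iterate_succ_apply]

lemma fdiff_mul (f g : ℕ → K) :
    fdiff (f * g) = (fdiff f) * (fun j => g (j+1)) + f * fdiff g := by
  funext j; simp [fdiff]; ring

/-- Discrete Leibniz rule. -/
lemma fdiff_iter_mul (n : ℕ) (f g : ℕ → K) (x : ℕ) :
    fdiff^[n] (f * g) x
      = ∑ j ∈ range (n+1), (n.choose j : K) * (fdiff^[j] f x * fdiff^[n-j] g (x + j)) := by
  induction n generalizing f g with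
  | zero => simp
  | succ n ih =>
      rw [Function.iterate_succ_apply, fdiff_mul]
      have hadd := congrFun (fdiff_iter_add n ((fdiff f) * (fun j => g (j+1))) (f * fdiff g)) x
      rw [hadd]
      simp only [Pi.add_apply]
      rw [ih, ih]
      have e1 : ∑ j ∈ range (n+1), (n.choose j : K) *
            (fdiff^[j] (fdiff f) x * fdiff^[n-j] (fun t => g (t+1)) (x + j))
          = ∑ j ∈ range (n+1), (n.choose j : K) *
            (fdiff^[j+1] f x * fdiff^[n-j] g (x + j + 1)) := by
        refine Finset.sum_congr rfl fun j hj => ?_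
        rw [fdiff_iter_shift, ← Function.iterate_succ_apply]
      rw [e1]
      have e2 : ∑ j ∈ range (n+1), (n.choose j : K) * (fdiff^[j] f x * fdiff^[n-j] (fdiff g) (x + j))
          = ∑ j ∈ range (n+1), (n.choose j : K) * (fdiff^[j] f x * fdiff^[n+1-j] g (x + j)) := by
        refine Finset.sum_congr rfl fun j hj => ?_
        rw [← Function.iterate_succ_apply, Nat.succ_sub (Nat.lt_succ_iff.mp (mem_range.mp hj))]
      rw [e2]
      set A : ℕ → K := fun j => fdiff^[j] f x * fdiff^[n+1-j] g (x + j) with hA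
      have hS1 : ∑ j ∈ range (n+1), (n.choose j : K) *
            (fdiff^[j+1] f x * fdiff^[n-j] g (x + j + 1))
          = ∑ j ∈ range (n+1), (n.choose j : K) * A (j+1) := by
        refine Finset.sum_congr rfl fun j hj => ?_
        have hj' : j ≤ n := Nat.lt_succ_iff.mp (mem_range.mp hj)
        have : n - j = n + 1 - (j+1) := by omega
        rw [hA]
        simp only []
        rw [this]
        ring_nf
      rw [hS1]
      have hS2 : ∑ j ∈ range (n+1), (n.choose j : K) * (fdiff^[j] f x * fdiff^[n+1-j] g (x + j))
          = ∑ j ∈ range (n+1), (n.choose j : K) * A j := rfl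
      rw [hS2]
      have hR : ∑ j ∈ range (n+1+1), ((n+1).choose j : K) * A j
          = ∑ j ∈ range (n+1), ((n+1).choose (j+1) : K) * A (j+1) + A 0 := by
        rw [Finset.sum_range_succ' (fun j => ((n+1).choose j : K) * A j) (n+1)]
        simp
      have hL : ∑ j ∈ range (n+1), (n.choose j : K) * A j
          = ∑ j ∈ range n, (n.choose (j+1) : K) * A (j+1) + A 0 := by
        rw [Finset.sum_range_succ' (fun j => (n.choose j : K) * A j) n]
        simp
      have hsplit : ∀ j, ((n+1).choose (j+1) : K) = (n.choose j : K) + (n.choose (j+1) : K) := by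
        intro j
        rw [Nat.choose_succ_succ']
        push_cast
        ring
      rw [hR, hL]
      have : ∑ j ∈ range (n+1), ((n+1).choose (j+1) : K) * A (j+1)
          = ∑ j ∈ range (n+1), (n.choose j : K) * A (j+1)
            + ∑ j ∈ range (n+1), (n.choose (j+1) : K) * A (j+1) := by
        rw [← Finset.sum_add_distrib]
        refine Finset.sum_congr rfl fun j hj => ?_
        rw [hsplit]; ring
      rw [this]
      have hlast : ∑ j ∈ range (n+1), (n.choose (j+1) : K) * A (j+1)
          = ∑ j ∈ range n, (n.choose (j+1) : K) * A (j+1) := by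
        rw [Finset.sum_range_succ]
        simp [Nat.choose_succ_self]
      rw [hlast]
      ring

lemma fdiff_const_of {f : ℕ → K} (h : fdiff f = 0) (x : ℕ) : f x = f 0 := by
  induction x with
  | zero => rfl
  | succ x ih =>
      have := congrFun h x
      simp only [Pi.zero_apply, fdiff_apply] at this
      exact (sub_eq_zero.mp this).trans ih

lemma degLT_mul {A B : ℕ} {f g : ℕ → K} (hf : DegLT (A+1) f) (hg : DegLT (B+1) g) :
    DegLT (A+B+1) (f * g) := by
  unfold DegLT
  funext x
  rw [fdiff_iter_mul]
  simp only [Pi.zero_apply]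
  refine Finset.sum_eq_zero fun j hj => ?_
  rcases le_or_gt (A+1) j with h | h
  · rw [degLT_apply hf h]; ring
  · have : B + 1 ≤ A + B + 1 - j := by omega
    rw [degLT_apply hg this]; ring

lemma fdiff_iter_mul_top {A B : ℕ} {f g : ℕ → K} (hf : DegLT (A+1) f) (hg : DegLT (B+1) g) :
    fdiff^[A+B] (f * g) 0 = ((A+B).choose A : K) * (fdiff^[A] f 0 * fdiff^[B] g 0) := by
  rw [fdiff_iter_mul]
  rw [Finset.sum_eq_single A]
  · have hB : A + B - A = B := by omega
    rw [hB]
    have hconst : fdiff (fdiff^[B] g) = 0 := by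
      have : fdiff^[B+1] g = fdiff (fdiff^[B] g) := by
        rw [Function.iterate_succ']; rfl
      rw [← this]; exact hg
    rw [show (0 + A = A) by omega, fdiff_const_of hconst A]
  · intro j hj hne
    rcases lt_or_gt_of_ne hne with h | h
    · have : B + 1 ≤ A + B - j := by omega
      rw [degLT_apply hg this]; ring
    · rw [degLT_apply hf h]; ring
  · intro h
    exact absurd (Finset.mem_range.mpr (by omega)) h

/-- Newton's forward-difference formula. -/
lemma newton (f : ℕ → K) (j : ℕ) :
    f j = ∑ s ∈ Finset.range (j+1), (j.choose s : K) * fdiff^[s] f 0 := by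
  induction j generalizing f with
  | zero => simp
  | succ j ih =>
      have h1 : f (j+1) = f j + fdiff f j := by simp [fdiff]
      rw [h1, ih f, ih (fdiff f)]
      have h2 : ∑ s ∈ Finset.range (j+1), (j.choose s : K) * fdiff^[s] (fdiff f) 0
          = ∑ s ∈ Finset.range (j+1), (j.choose s : K) * fdiff^[s+1] f 0 := by
        refine Finset.sum_congr rfl fun s hs => ?_
        rw [← Function.iterate_succ_apply]
      rw [h2]
      rw [Finset.sum_range_succ' (fun s => ((j+1).choose s : K) * fdiff^[s] f 0) (j+1)]
      have hSc : ∑ s ∈ Finset.range (j+1), ((j+1).choose (s+1) : K) * fdiff^[s+1] f 0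
          = ∑ s ∈ Finset.range (j+1), (j.choose s : K) * fdiff^[s+1] f 0
            + ∑ s ∈ Finset.range (j+1), (j.choose (s+1) : K) * fdiff^[s+1] f 0 := by
        rw [← Finset.sum_add_distrib]
        refine Finset.sum_congr rfl fun s hs => ?_
        rw [Nat.choose_succ_succ']
        push_cast; ring
      have hSd : ∑ s ∈ Finset.range (j+1), (j.choose (s+1) : K) * fdiff^[s+1] f 0
          = ∑ s ∈ Finset.range j, (j.choose (s+1) : K) * fdiff^[s+1] f 0 := by
        rw [Finset.sum_range_succ]
        simp [Nat.choose_succ_self]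
      have hSa : ∑ s ∈ Finset.range (j+1), (j.choose s : K) * fdiff^[s] f 0
          = ∑ s ∈ Finset.range j, (j.choose (s+1) : K) * fdiff^[s+1] f 0 + f 0 := by
        rw [Finset.sum_range_succ' (fun s => (j.choose s : K) * fdiff^[s] f 0) j]
        simp
      rw [hSc, hSd, hSa]
      simp only [Nat.choose_zero_right, Nat.cast_one, one_mul, Function.iterate_zero_apply]
      ring

end Fdiff

section PS
variable {K : Type} [CommRing K]

lemma pcomp_coeff (f g : PowerSeries K) (n : ℕ) :
    coeff n (pcomp f g) = ∑ m ∈ range (n+1), coeff m f * coeff n (g ^ m) := by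
  unfold pcomp
  rw [PowerSeries.coeff_mk]
  have hdeg : (trunc (n+1) f).natDegree < n+1 := by
    rcases eq_or_ne (trunc (n+1) f) 0 with h | h
    · rw [h]; simp
    · exact (Polynomial.natDegree_lt_iff_degree_lt h).mpr (degree_trunc_lt f (n+1))
  rw [Polynomial.eval₂_eq_sum_range' (PowerSeries.C (R := K)) hdeg g]
  rw [map_sum]
  refine Finset.sum_congr rfl fun m hm => ?_
  rw [PowerSeries.coeff_trunc, if_pos (mem_range.mp hm)]
  rw [PowerSeries.coeff_C_mul]

lemma coeff_pow_lt {g : PowerSeries K} (h0 : coeff 0 g = 0) :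
    ∀ {l v : ℕ}, v < l → coeff v (g ^ l) = 0 := by
  intro l
  induction l with
  | zero => intro v hv; omega
  | succ l ih =>
      intro v hv
      rw [pow_succ', coeff_mul]
      refine Finset.sum_eq_zero fun uv huv => ?_
      have hsum : uv.1 + uv.2 = v := Finset.HasAntidiagonal.mem_antidiagonal.mp huv
      rcases Nat.eq_zero_or_pos uv.1 with h | h
      · rw [h, h0]; ring
      · rw [ih (by omega)]; ring

end PS

section Main
variable {K : Type} [CommRing K]

lemma sum_Icc_two (f : ℕ → K) : ∀ m, 1 ≤ m → ∑ x ∈ Icc 2 m, f x = ∑ t ∈ range (m-1), f (t+2) := by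
  intro m
  induction m with
  | zero => omega
  | succ m ih =>
      intro _
      rcases Nat.eq_zero_or_pos m with rfl | hm
      · simp
      · rw [Finset.sum_Icc_succ_top (by omega), ih hm,
          show m + 1 - 1 = (m-1) + 1 by omega, Finset.sum_range_succ,
          show m - 1 + 2 = m + 1 by omega]

/-- Basic coefficients of the iterates. -/
lemma iter_basic {σ : PowerSeries K} {d : ℕ}
    (h0 : coeff 0 σ = 0) (h1 : coeff 1 σ = 1)
    (hlow : ∀ m', 2 ≤ m' → m' ≤ d → coeff m' σ = 0) :
    ∀ j, coeff 0 (pcompIter σ j) = 0 ∧ coeff 1 (pcompIter σ j) = 1 ∧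
      ∀ m, 2 ≤ m → m ≤ d → coeff m (pcompIter σ j) = 0 := by
  intro j
  induction j with
  | zero =>
      refine ⟨by simp [pcompIter], by simp [pcompIter], fun m h2 hd => ?_⟩
      show coeff m X = 0
      rw [PowerSeries.coeff_X, if_neg (by omega)]
  | succ j ih =>
      obtain ⟨ih0, ih1, ihm⟩ := ih
      have key : ∀ m, coeff m (pcompIter σ (j+1))
          = ∑ m' ∈ range (m+1), coeff m' σ * coeff m (pcompIter σ j ^ m') := by
        intro m
        show coeff m (pcomp σ (pcompIter σ j)) = _
        exact pcomp_coeff σ (pcompIter σ j) m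
      refine ⟨?_, ?_, ?_⟩
      · rw [key 0]
        simp [h0]
      · rw [key 1]
        rw [Finset.sum_range_succ, Finset.sum_range_one]
        simp [h0, h1, ih1]
      · intro m h2 hd
        rw [key m]
        refine Finset.sum_eq_zero fun m' hm' => ?_
        rcases Nat.lt_or_ge m' 2 with h | h
        · interval_cases m'
          · rw [h0]; ring
          · rw [pow_one, ihm m h2 hd, h1, one_mul]
        · have hm'm := Finset.mem_range.mp hm'
          rw [hlow m' h (by omega : m' ≤ d)]
          ring

/-- The coefficient recursion for iterates. -/
lemma coeff_succ {σ : PowerSeries K}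
    (h0 : coeff 0 σ = 0) (h1 : coeff 1 σ = 1) (m j : ℕ) (hm : 1 ≤ m) :
    coeff m (pcompIter σ (j+1)) = coeff m (pcompIter σ j)
      + ∑ m' ∈ Icc 2 m, coeff m' σ * coeff m (pcompIter σ j ^ m') := by
  have key : coeff m (pcompIter σ (j+1))
      = ∑ m' ∈ range (m+1), coeff m' σ * coeff m (pcompIter σ j ^ m') :=
    pcomp_coeff σ (pcompIter σ j) m
  rw [key, sum_Icc_two (fun m' => coeff m' σ * coeff m (pcompIter σ j ^ m')) m hm]
  rw [Finset.sum_range_succ' (fun m' => coeff m' σ * coeff m (pcompIter σ j ^ m')) m]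
  rw [show m = (m - 1) + 1 by omega]
  rw [Finset.sum_range_succ' (fun t => coeff (t+1) σ * coeff ((m-1)+1) (pcompIter σ j ^ (t+1))) (m-1)]
  rw [show (m - 1) + 1 = m by omega]
  simp only [h0, h1, zero_mul, add_zero, one_mul, pow_one]
  rw [add_comm]
  have : ∀ t ∈ range (m-1), coeff (t+1+1) σ * coeff m (pcompIter σ j ^ (t+1+1))
      = coeff (t+2) σ * coeff m (pcompIter σ j ^ (t+2)) := by
    intro t ht; norm_num
  rw [Finset.sum_congr rfl this, pow_one]

lemma degLT_const_mul {n : ℕ} {c : K} {f : ℕ → K} (h : DegLT n f) :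
    DegLT n (fun j => c * f j) := by
  unfold DegLT at *
  rw [fdiff_iter_const_mul]
  funext j
  rw [h]
  simp

lemma div_add_div_le (x y d : ℕ) (hd : 0 < d) : x/d + y/d ≤ (x+y)/d := by
  rw [Nat.le_div_iff_mul_le hd, add_mul]
  exact Nat.add_le_add (Nat.div_mul_le_self x d) (Nat.div_mul_le_self y d)

/-- The coefficient functions of the iterates. -/
noncomputable def phiF (σ : PowerSeries K) (m : ℕ) : ℕ → K := fun j => coeff m (pcompIter σ j)

lemma fdiff_phiF {σ : PowerSeries K} {d : ℕ} (hd : 2 ≤ d)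
    (h0 : coeff 0 σ = 0) (h1 : coeff 1 σ = 1)
    (hlow : ∀ m', 2 ≤ m' → m' ≤ d → coeff m' σ = 0) (m : ℕ) (hm : 1 ≤ m) :
    fdiff (phiF σ m)
      = fun j => ∑ m' ∈ Icc (d+1) m, coeff m' σ * coeff m (pcompIter σ j ^ m') := by
  funext j
  rw [fdiff_apply]
  show coeff m (pcompIter σ (j+1)) - coeff m (pcompIter σ j) = _
  rw [coeff_succ h0 h1 m j hm]
  rw [add_sub_cancel_left]
  refine (Finset.sum_subset (Finset.Icc_subset_Icc_left (by omega)) fun x hx hnx => ?_).symm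
  have h2 := Finset.mem_Icc.mp hx
  have h3 : ¬(d + 1 ≤ x ∧ x ≤ m) := fun hc => hnx (Finset.mem_Icc.mpr hc)
  rw [hlow x h2.1 (by omega)]
  ring

lemma pow_deg {σ : PowerSeries K} {d : ℕ} (hd : 1 ≤ d)
    (hz : ∀ j, coeff 0 (pcompIter σ j) = 0)
    (M : ℕ) (hM : ∀ u, u ≤ M → DegLT ((u-1)/d + 1) (phiF σ u)) :
    ∀ s, 1 ≤ s → ∀ n, n ≤ M + s - 1 →
      DegLT ((n - s)/d + 1) (fun j => coeff n (pcompIter σ j ^ s)) := by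
  intro s
  induction s with
  | zero => omega
  | succ s ih =>
      intro _ n hn
      rcases Nat.eq_zero_or_pos s with rfl | hs
      · have hrw : (fun j => coeff n (pcompIter σ j ^ (0+1))) = phiF σ n := by
          funext j; rw [zero_add, pow_one]; rfl
        rw [hrw]
        exact hM n (by omega)
      · have hrw : (fun j => coeff n (pcompIter σ j ^ (s+1)))
            = fun j => ∑ uv ∈ antidiagonal n, phiF σ uv.1 j * coeff uv.2 (pcompIter σ j ^ s) := by
          funext j; rw [pow_succ', coeff_mul]; rfl
        rw [hrw]
        refine degLT_sum fun uv huv => ?_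
        have hsum : uv.1 + uv.2 = n := Finset.HasAntidiagonal.mem_antidiagonal.mp huv
        rcases Nat.eq_zero_or_pos uv.1 with h1 | h1
        · refine degLT_of_all_zero fun j => ?_
          have : phiF σ uv.1 j = 0 := by rw [h1]; exact hz j
          rw [this]; ring
        rcases Nat.lt_or_ge uv.2 s with h2 | h2
        · refine degLT_of_all_zero fun j => ?_
          rw [coeff_pow_lt (hz j) h2]; ring
        · have d1 : DegLT ((uv.1 - 1)/d + 1) (phiF σ uv.1) := hM uv.1 (by omega)
          have d2 : DegLT ((uv.2 - s)/d + 1) (fun j => coeff uv.2 (pcompIter σ j ^ s)) :=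
            ih hs uv.2 (by omega)
          refine degLT_mono (degLT_mul d1 d2) ?_
          have hle : (uv.1 - 1)/d + (uv.2 - s)/d ≤ (n - (s+1))/d := by
            have := div_add_div_le (uv.1 - 1) (uv.2 - s) d hd
            rwa [show uv.1 - 1 + (uv.2 - s) = n - (s+1) by omega] at this
          omega

lemma deg_phi {σ : PowerSeries K} {d : ℕ} (hd : 2 ≤ d)
    (h0 : coeff 0 σ = 0) (h1 : coeff 1 σ = 1)
    (hlow : ∀ m', 2 ≤ m' → m' ≤ d → coeff m' σ = 0) :
    ∀ m, DegLT ((m-1)/d + 1) (phiF σ m) := by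
  intro m
  induction m using Nat.strong_induction_on with
  | _ m IH =>
    have hz : ∀ j, coeff 0 (pcompIter σ j) = 0 := fun j => (iter_basic h0 h1 hlow j).1
    rcases Nat.eq_zero_or_pos m with rfl | hm1
    · exact degLT_of_all_zero hz
    rcases Nat.lt_or_ge m 2 with hm2 | hm2
    · have hm : m = 1 := by omega
      subst hm
      have : phiF σ 1 = fun _ => (1:K) := funext fun j => (iter_basic h0 h1 hlow j).2.1
      rw [this, show (1-1)/d + 1 = 1 by simp]
      exact degLT_const 1
    rcases Nat.lt_or_ge d m with hdm | hdm
    swap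
    · exact degLT_of_all_zero fun j => (iter_basic h0 h1 hlow j).2.2 m hm2 hdm
    · -- main case : d + 1 ≤ m
      unfold DegLT
      rw [Function.iterate_succ_apply]
      show fdiff^[(m-1)/d] (fdiff (phiF σ m)) = 0
      rw [fdiff_phiF hd h0 h1 hlow m (by omega)]
      refine degLT_sum fun m' hm' => ?_
      have hmm := Finset.mem_Icc.mp hm'
      refine degLT_const_mul ?_
      have hp := pow_deg (by omega) hz (m-1) (fun u hu => IH u (by omega)) m'
        (by omega) m (by omega)
      refine degLT_mono hp ?_
      have h5 : (m - m')/d ≤ (m - 1 - d)/d := Nat.div_le_div_right (by omega)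
      have h6 : (m - 1 - d)/d + 1 = (m-1)/d := by
        have := Nat.add_div_right (m - 1 - d) (show 0 < d by omega)
        rw [show m - 1 - d + d = m - 1 by omega] at this
        omega
      omega

lemma pow_deg' {σ : PowerSeries K} {d : ℕ} (hd : 2 ≤ d)
    (h0 : coeff 0 σ = 0) (h1 : coeff 1 σ = 1)
    (hlow : ∀ m', 2 ≤ m' → m' ≤ d → coeff m' σ = 0) :
    ∀ s n, DegLT ((n - s)/d + 1) (fun j => coeff n (pcompIter σ j ^ s)) := by
  intro s n
  rcases Nat.eq_zero_or_pos s with rfl | hs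
  · have : (fun j => coeff n (pcompIter σ j ^ 0)) = fun _ => coeff n (1 : PowerSeries K) := by
      funext j; rw [pow_zero]
    rw [this]
    exact degLT_mono (degLT_const _) (Nat.le_add_left 1 _)
  · exact pow_deg (by omega) (fun j => (iter_basic h0 h1 hlow j).1) n
      (fun u _ => deg_phi hd h0 h1 hlow u) s hs n (by omega)

/-- Abstract "binomial convolution power" recursion. -/
def CCfun (L : ℕ → K) : ℕ → ℕ → K
  | 0, w => if w = 0 then 1 else 0
  | s+1, w => ∑ l ∈ range (w+1), (w.choose l : K) * L l * CCfun L s (w - l)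

/-- Leading (binomial-basis) coefficient of the `1+l*d` coefficient of the iterates. -/
noncomputable def Lfun (σ : PowerSeries K) (d : ℕ) : ℕ → K :=
  fun l => fdiff^[l] (phiF σ (1 + l*d)) 0

lemma pow_top {σ : PowerSeries K} {d : ℕ} (hd : 2 ≤ d)
    (h0 : coeff 0 σ = 0) (h1 : coeff 1 σ = 1)
    (hlow : ∀ m', 2 ≤ m' → m' ≤ d → coeff m' σ = 0) :
    ∀ s w, fdiff^[w] (fun j => coeff (s + w*d) (pcompIter σ j ^ s)) 0
      = CCfun (Lfun σ d) s w := by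
  have hz : ∀ j, coeff 0 (pcompIter σ j) = 0 := fun j => (iter_basic h0 h1 hlow j).1
  intro s
  induction s with
  | zero =>
      intro w
      rcases Nat.eq_zero_or_pos w with rfl | hw
      · simp [CCfun]
      · have hwd : 0 < w * d := Nat.mul_pos hw (by omega)
        have hwz : (fun j => coeff (0 + w*d) (pcompIter σ j ^ 0)) = (0 : ℕ → K) := by
          funext j
          rw [pow_zero, PowerSeries.coeff_one, if_neg (by omega)]
          rfl
        rw [hwz, fdiff_iter_zero_fn]
        show (0:K) = CCfun (Lfun σ d) 0 w
        simp [CCfun, Nat.pos_iff_ne_zero.mp hw]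
  | succ s ih =>
      intro w
      set n := (s+1) + w*d with hn
      have hrw : (fun j => coeff n (pcompIter σ j ^ (s+1)))
          = fun j => ∑ u ∈ range (n+1),
              (fun u => fun j => phiF σ u j * coeff (n - u) (pcompIter σ j ^ s)) u j := by
        funext j
        rw [pow_succ', coeff_mul, Finset.Nat.sum_antidiagonal_eq_sum_range_succ_mk]
        rfl
      rw [hrw, congrFun (fdiff_iter_sum w (range (n+1))
        (fun u => fun j => phiF σ u j * coeff (n - u) (pcompIter σ j ^ s))) 0]
      have hTsub : (range (w+1)).image (fun l => 1 + l*d) ⊆ range (n+1) := by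
        intro u hu
        obtain ⟨l, hl, rfl⟩ := Finset.mem_image.mp hu
        have : l * d ≤ w * d := Nat.mul_le_mul_right d (Nat.lt_succ_iff.mp (mem_range.mp hl))
        exact mem_range.mpr (by omega)
      rw [← Finset.sum_subset hTsub ?zeros]
      case zeros =>
        intro u hu hnotu
        show fdiff^[w] (fun j => phiF σ u j * coeff (n - u) (pcompIter σ j ^ s)) 0 = 0
        have hun : u ≤ n := Nat.lt_succ_iff.mp (mem_range.mp hu)
        rcases Nat.eq_zero_or_pos u with rfl | hu1
        · have : (fun j => phiF σ 0 j * coeff (n - 0) (pcompIter σ j ^ s)) = (0 : ℕ → K) := by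
            funext j
            show coeff 0 (pcompIter σ j) * _ = 0
            rw [hz j]; ring
          rw [this, fdiff_iter_zero_fn]; rfl
        rcases Nat.lt_or_ge (n - u) s with hv | hv
        · have : (fun j => phiF σ u j * coeff (n - u) (pcompIter σ j ^ s)) = (0 : ℕ → K) := by
            funext j
            simp only [Pi.zero_apply]
            rw [coeff_pow_lt (hz j) hv]; ring
          rw [this, fdiff_iter_zero_fn]; rfl
        rcases Nat.lt_or_ge u (d+1) with hu2 | hu2
        · rcases Nat.lt_or_ge u 2 with hu3 | hu3
          · have hu4 : u = 1 := by omega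
            exact absurd (Finset.mem_image.mpr ⟨0, mem_range.mpr (by omega), by omega⟩)
              (hu4 ▸ hnotu)
          · have hzz : (fun j => phiF σ u j * coeff (n - u) (pcompIter σ j ^ s)) = (0 : ℕ → K) := by
              funext j
              have h5 := (iter_basic h0 h1 hlow j).2.2 u hu3 (by omega)
              show coeff u (pcompIter σ j) * _ = 0
              rw [h5]; ring
            rw [hzz, fdiff_iter_zero_fn]; rfl
        · by_cases hdvd : d ∣ (u - 1)
          · obtain ⟨l, hl⟩ := hdvd
            have hld : l * d = u - 1 := by rw [mul_comm]; omega
            have hlw : l ≤ w := by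
              by_contra hcon
              have h2 : (w+1) * d ≤ l * d := Nat.mul_le_mul_right d (by omega)
              have h3 : (w+1) * d = w*d + d := by ring
              omega
            exact absurd (Finset.mem_image.mpr ⟨l, mem_range.mpr (by omega), by omega⟩) hnotu
          · set A := (u-1)/d with hA
            set c := (u-1) % d with hc
            have e1 : d * A + c = u - 1 := Nat.div_add_mod (u-1) d
            have hc1 : 1 ≤ c := by
              rcases Nat.eq_zero_or_pos c with h | h
              · rw [hc] at h
                exact absurd (Nat.dvd_of_mod_eq_zero h) hdvd
              · exact h
            have hcd : c < d := Nat.mod_lt _ (by omega)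
            have h3 : d * A = A * d := mul_comm d A
            have hAw : A < w := by
              have h4 : A * d < w * d := by omega
              exact lt_of_mul_lt_mul_right h4 (Nat.zero_le d)
            have h5 : (A+1) * d ≤ w * d := Nat.mul_le_mul_right d hAw
            have h6 : (A+1) * d = A*d + d := by ring
            have em1 : (w - A - 1) * d = w*d - A*d - d := by
              rw [Nat.sub_mul, Nat.sub_mul, one_mul]
            have em2 : (w - A) * d = w*d - A*d := Nat.sub_mul w A d
            have h7 : (w - A - 1 + 1) * d = w*d - A*d := by
              rw [show w - A - 1 + 1 = w - A by omega, em2]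
            have hB : (n - u - s) / d = w - A - 1 := by
              refine Nat.div_eq_of_lt_le (by omega) (by omega)
            have hdeg : DegLT w
                (phiF σ u * (fun j => coeff (n-u) (pcompIter σ j ^ s))) := by
              have dphi : DegLT (A + 1) (phiF σ u) := deg_phi hd h0 h1 hlow u
              have dpow : DegLT ((w - A - 1) + 1)
                  (fun j => coeff (n-u) (pcompIter σ j ^ s)) := by
                have h8 := pow_deg' hd h0 h1 hlow s (n - u)
                rwa [hB] at h8
              exact degLT_mono (degLT_mul dphi dpow) (by omega)
            exact degLT_apply hdeg le_rfl 0
      · rw [Finset.sum_image (fun x hx y hy hxy => by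
          have : x * d = y * d := by omega
          exact Nat.eq_of_mul_eq_mul_right (by omega) this)]
        have hterm : ∀ l ∈ range (w+1),
            (fun u => fdiff^[w]
              ((fun u => fun j => phiF σ u j * coeff (n - u) (pcompIter σ j ^ s)) u) 0) (1+l*d)
            = (w.choose l : K) * Lfun σ d l * CCfun (Lfun σ d) s (w - l) := by
          intro l hl
          have hlw : l ≤ w := Nat.lt_succ_iff.mp (mem_range.mp hl)
          show fdiff^[w]
            (fun j => phiF σ (1+l*d) j * coeff (n - (1+l*d)) (pcompIter σ j ^ s)) 0 = _
          have hv : n - (1+l*d) = s + (w-l)*d := by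
            have em2 : (w - l) * d = w*d - l*d := Nat.sub_mul w l d
            have h4 : l * d ≤ w * d := Nat.mul_le_mul_right d hlw
            omega
          rw [hv]
          have dphi : DegLT (l + 1) (phiF σ (1+l*d)) := by
            have h4 := deg_phi hd h0 h1 hlow (1+l*d)
            rwa [show (1+l*d-1)/d = l by
              rw [Nat.add_sub_cancel_left]; exact Nat.mul_div_cancel l (by omega)] at h4
          have dpow : DegLT ((w - l) + 1)
              (fun j => coeff (s + (w-l)*d) (pcompIter σ j ^ s)) := by
            have h4 := pow_deg' hd h0 h1 hlow s (s + (w-l)*d)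
            rwa [show (s + (w-l)*d - s)/d = w - l by
              rw [Nat.add_sub_cancel_left]; exact Nat.mul_div_cancel _ (by omega)] at h4
          have hmul := fdiff_iter_mul_top dphi dpow
          rw [show l + (w - l) = w by omega] at hmul
          have hmul' : fdiff^[w]
              (fun j => phiF σ (1+l*d) j * coeff (s + (w-l)*d) (pcompIter σ j ^ s)) 0
              = (w.choose l : K) * (fdiff^[l] (phiF σ (1+l*d)) 0
                * fdiff^[w-l] (fun j => coeff (s + (w-l)*d) (pcompIter σ j ^ s)) 0) := hmul
          rw [hmul', ih (w-l)]
          show (w.choose l : K) * (Lfun σ d l * CCfun (Lfun σ d) s (w-l)) = _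
          ring
        rw [Finset.sum_congr rfl hterm]
        show _ = CCfun (Lfun σ d) (s+1) w
        rw [CCfun]

lemma L_rec {σ : PowerSeries K} {d : ℕ} (hd : 2 ≤ d)
    (h0 : coeff 0 σ = 0) (h1 : coeff 1 σ = 1)
    (hlow : ∀ m', 2 ≤ m' → m' ≤ d → coeff m' σ = 0) (l : ℕ) :
    Lfun σ d (l+1) = coeff (d+1) σ * CCfun (Lfun σ d) (d+1) l := by
  set m := 1 + (l+1)*d with hm
  have hm1 : m = (d+1) + l*d := by
    have : (l+1)*d = l*d + d := by ring
    omega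
  show fdiff^[l+1] (phiF σ m) 0 = _
  rw [Function.iterate_succ_apply]
  rw [fdiff_phiF hd h0 h1 hlow m (by omega)]
  rw [congrFun (fdiff_iter_sum l (Icc (d+1) m)
    (fun m' => fun j => coeff m' σ * coeff m (pcompIter σ j ^ m'))) 0]
  rw [Finset.sum_eq_single (d+1)]
  · have hc : fdiff^[l] (fun j => coeff (d+1) σ * coeff m (pcompIter σ j ^ (d+1))) 0
        = coeff (d+1) σ * fdiff^[l] (fun j => coeff m (pcompIter σ j ^ (d+1))) 0 :=
      congrFun (fdiff_iter_const_mul l _ _) 0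
    rw [hc]
    congr 1
    have := pow_top hd h0 h1 hlow (d+1) l
    rw [← hm1] at this
    exact this
  · intro m' hm' hne
    have hmm := Finset.mem_Icc.mp hm'
    have hl1 : 1 ≤ l := by
      by_contra hcon
      have : l = 0 := by omega
      subst this
      have : m = d + 1 := by omega
      omega
    have hc : fdiff^[l] (fun j => coeff m' σ * coeff m (pcompIter σ j ^ m')) 0
        = coeff m' σ * fdiff^[l] (fun j => coeff m (pcompIter σ j ^ m')) 0 :=
      congrFun (fdiff_iter_const_mul l _ _) 0
    rw [hc]
    have hdeg := pow_deg' hd h0 h1 hlow m' m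
    have harith : (m - m')/d + 1 ≤ l := by
      have h4 : m - m' ≤ l*d - 1 := by omega
      have h5 : (m - m')/d ≤ (l*d - 1)/d := Nat.div_le_div_right h4
      have h6 : (l*d - 1)/d = l - 1 := by
        have e1 : (l-1)*d = l*d - d := by rw [Nat.sub_mul, one_mul]
        have e3 : 1*d ≤ l*d := Nat.mul_le_mul_right d hl1
        rw [one_mul] at e3
        refine Nat.div_eq_of_lt_le (by omega) ?_
        rw [show l-1+1 = l by omega]
        omega
      omega
    rw [degLT_apply hdeg harith 0]
    ring
  · intro hc
    exact absurd (Finset.mem_Icc.mpr ⟨le_refl _, by omega⟩) hc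

lemma CC_closed (L : ℕ → K) (a : K) :
    ∀ s w, (∀ l, l ≤ w → L l = a^l) → CCfun L s w = a^w * ((s:ℕ):K)^w := by
  intro s
  induction s with
  | zero =>
      intro w h
      rcases Nat.eq_zero_or_pos w with rfl | hw
      · simp [CCfun]
      · rw [show CCfun L 0 w = 0 by simp [CCfun, Nat.pos_iff_ne_zero.mp hw]]
        rw [Nat.cast_zero, zero_pow (by omega), mul_zero]
  | succ s ih =>
      intro w h
      rw [CCfun]
      have hterm : ∀ l ∈ range (w+1), (w.choose l : K) * L l * CCfun L s (w - l)
          = a^w * ((w.choose l : K) * ((s:ℕ):K)^(w-l)) := by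
        intro l hl
        have hlw : l ≤ w := Nat.lt_succ_iff.mp (mem_range.mp hl)
        rw [h l hlw, ih (w-l) (fun l' hl' => h l' (by omega))]
        have : a^l * a^(w-l) = a^w := by
          rw [← pow_add]
          congr 1
          omega
        calc (w.choose l : K) * a^l * (a^(w-l) * ((s:ℕ):K)^(w-l))
            = (a^l * a^(w-l)) * ((w.choose l : K) * ((s:ℕ):K)^(w-l)) := by ring
          _ = a^w * ((w.choose l : K) * ((s:ℕ):K)^(w-l)) := by rw [this]
      rw [Finset.sum_congr rfl hterm, ← Finset.mul_sum]
      congr 1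
      have hb := add_pow (1 : K) (((s:ℕ):K)) w
      push_cast
      rw [show ((s:K) + 1)^w = (1 + (s:K))^w by ring, hb]
      refine Finset.sum_congr rfl fun l hl => ?_
      rw [one_pow]
      ring

lemma L_val {σ : PowerSeries K} {d : ℕ} {a : K} (hd : 2 ≤ d)
    (h0 : coeff 0 σ = 0) (h1 : coeff 1 σ = 1)
    (hlow : ∀ m', 2 ≤ m' → m' ≤ d → coeff m' σ = 0)
    (hdK : ((d:ℕ):K) = 0) (hlead : coeff (d+1) σ = a) :
    ∀ w, Lfun σ d w = a^w := by
  intro w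
  induction w using Nat.strong_induction_on with
  | _ w IH =>
    rcases Nat.eq_zero_or_pos w with rfl | hw
    · show fdiff^[0] (phiF σ (1 + 0*d)) 0 = a^0
      simp only [Function.iterate_zero_apply, pow_zero]
      show coeff (1 + 0*d) (pcompIter σ 0) = 1
      show coeff (1 + 0*d) (X : PowerSeries K) = 1
      rw [PowerSeries.coeff_X, if_pos (by omega)]
    · obtain ⟨w', rfl⟩ : ∃ w', w = w' + 1 := ⟨w - 1, by omega⟩
      rw [L_rec hd h0 h1 hlow w', hlead]
      rw [CC_closed (Lfun σ d) a (d+1) w' (fun l hl => IH l (by omega))]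
      have : (((d+1 : ℕ)):K) = 1 := by push_cast [hdK]; ring
      rw [this, one_pow, mul_one, ← pow_succ']

end Main

theorem stmt6 {k : Type} [Field k] (p : ℕ) [Fact p.Prime] [CharP k p]
    (r : ℕ) (hr : 1 ≤ r) (q : ℕ) (hq : q = p ^ r) (i : ℕ) (hi : 1 ≤ i)
    (a : k) (ha : a ≠ 0) (σ : PowerSeries k)
    (h0 : PowerSeries.coeff 0 σ = 0) (h1 : PowerSeries.coeff 1 σ = 1)
    (hlow : ∀ m, 2 ≤ m → m < 1 + q * i → PowerSeries.coeff m σ = 0)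
    (hlead : PowerSeries.coeff (1 + q * i) σ = a) :
    (∀ m, 2 ≤ m → m < 1 + p * q * i → PowerSeries.coeff m (pcompIter σ p) = 0) ∧
    PowerSeries.coeff (1 + p * q * i) (pcompIter σ p) ≠ 0 := by
  have hp : p.Prime := Fact.out
  set d := q * i with hd_def
  have hp2 : 2 ≤ p := hp.two_le
  have hq2 : p ≤ q := by
    rw [hq]
    calc p = p^1 := (pow_one p).symm
      _ ≤ p^r := Nat.pow_le_pow_right (by omega) hr
  have hd : 2 ≤ d := by
    have : q * 1 ≤ q * i := Nat.mul_le_mul_left q hi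
    omega
  have hpd : p ∣ d := Dvd.dvd.mul_right (hq ▸ dvd_pow_self p (by omega : r ≠ 0)) i
  have hdK : ((d:ℕ):k) = 0 := (CharP.cast_eq_zero_iff k p d).mpr hpd
  have hlow' : ∀ m', 2 ≤ m' → m' ≤ d → PowerSeries.coeff m' σ = 0 :=
    fun m' h2 h3 => hlow m' h2 (by omega)
  have hlead' : PowerSeries.coeff (d+1) σ = a := by
    rw [show d + 1 = 1 + d by omega]
    exact hlead
  have hassoc : p*q*i = p*d := by rw [hd_def, ← mul_assoc]
  have newtonEval : ∀ m, 2 ≤ m →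
      PowerSeries.coeff m (pcompIter σ p) = fdiff^[p] (phiF σ m) 0 := by
    intro m h2
    have h3 : PowerSeries.coeff m (pcompIter σ p) = phiF σ m p := rfl
    rw [h3, newton (phiF σ m) p]
    rw [Finset.sum_eq_single p]
    · rw [Nat.choose_self, Nat.cast_one, one_mul]
    · intro s hs hne
      have hsp : s < p := by
        have := Finset.mem_range.mp hs
        omega
      rcases Nat.eq_zero_or_pos s with rfl | hs1
      · simp only [Function.iterate_zero_apply]
        have h4 : phiF σ m 0 = 0 := by
          show PowerSeries.coeff m (X : PowerSeries k) = 0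
          rw [PowerSeries.coeff_X, if_neg (by omega)]
        rw [h4]; ring
      · have h4 : ((p.choose s : ℕ) : k) = 0 :=
          (CharP.cast_eq_zero_iff k p _).mpr (hp.dvd_choose_self (by omega) hsp)
        rw [h4]; ring
    · intro hcon
      exact absurd (Finset.mem_range.mpr (by omega)) hcon
  constructor
  · intro m h2 hm
    have hmpd : m ≤ p*d := by omega
    rw [newtonEval m h2]
    have hdeg : (m-1)/d + 1 ≤ p := by
      have h5 : (m-1)/d ≤ (p*d - 1)/d := Nat.div_le_div_right (by omega)
      have h6 : (p*d - 1)/d = p - 1 := by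
        have e1 : (p-1)*d = p*d - d := by rw [Nat.sub_mul, one_mul]
        have e3 : 1*d ≤ p*d := Nat.mul_le_mul_right d (by omega)
        rw [one_mul] at e3
        refine Nat.div_eq_of_lt_le (by omega) ?_
        rw [show p-1+1 = p by omega]
        omega
      omega
    exact degLT_apply (deg_phi hd h0 h1 hlow' m) hdeg 0
  · rw [show 1 + p*q*i = 1 + p*d by omega]
    have h22 : 2*2 ≤ p*d := Nat.mul_le_mul hp2 hd
    rw [newtonEval (1+p*d) (by omega)]
    have h5 : fdiff^[p] (phiF σ (1+p*d)) 0 = Lfun σ d p := rfl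
    rw [h5, L_val hd h0 h1 hlow' hdK hlead' p]
    exact pow_ne_zero p ha
end
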